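/- arXiv:2112.01003 — 5 statements merged into one kernel-verified Lean document; each statement's English description precedes it below -/
import Mathlib

section
/- Let V be a finite set and R, S, T be finite subsets of V × V. For a in V, let deg_R(a) = |{b : (a,b) in R}| and deg_T(a) = |{c : (a,c) in T}|. Then the number of triples (a,b,c) in V^3 with (a,b) in R, (b,c) in S, and (a,c) in T is at most sqrt( sum_{a in V} deg_R(a)^2 ) * sqrt( sum_{a in V} deg_T(a)^2 ). In particular, if both sums of squared degrees are at most L^2, the count is at most L^2. -/
open Finset

/-- Cauchy–Schwarz bound for the acyclic triangle join: the number of triples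
`(a,b,c)` with `(a,b) ∈ R`, `(b,c) ∈ S`, `(a,c) ∈ T` is at most
`√(∑ₐ deg_R(a)²) · √(∑ₐ deg_T(a)²)`; in particular it is at most `L²` whenever
both sums of squared degrees are at most `L²`. -/
theorem triangle_join_cauchy_schwarz {V : Type*} [Fintype V] [DecidableEq V]
    (R S T : Finset (V × V)) (L : ℝ) :
    (((Finset.univ : Finset (V × V × V)).filter
        (fun t => (t.1, t.2.1) ∈ R ∧ (t.2.1, t.2.2) ∈ S ∧ (t.1, t.2.2) ∈ T)).card : ℝ) ≤
      Real.sqrt (∑ a : V, (((R.filter (fun q => q.1 = a)).card : ℝ)) ^ 2) *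
      Real.sqrt (∑ a : V, (((T.filter (fun q => q.1 = a)).card : ℝ)) ^ 2) ∧
    ((∑ a : V, (((R.filter (fun q => q.1 = a)).card : ℝ)) ^ 2 ≤ L ^ 2) →
     (∑ a : V, (((T.filter (fun q => q.1 = a)).card : ℝ)) ^ 2 ≤ L ^ 2) →
     (((Finset.univ : Finset (V × V × V)).filter
        (fun t => (t.1, t.2.1) ∈ R ∧ (t.2.1, t.2.2) ∈ S ∧ (t.1, t.2.2) ∈ T)).card : ℝ) ≤
        L ^ 2) := by
  set dR : V → ℕ := fun a => (R.filter (fun q => q.1 = a)).card with hdR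
  set dT : V → ℕ := fun a => (T.filter (fun q => q.1 = a)).card with hdT
  have deg_eq : ∀ (U : Finset (V × V)) (a : V),
      (univ.filter (fun b => (a, b) ∈ U)).card = (U.filter (fun q => q.1 = a)).card := by
    intro U a
    apply Finset.card_bij (fun b _ => (a, b))
    · intro b hb; simp at hb ⊢; exact hb
    · intro b hb b' hb' h; simpa using h
    · intro q hq; simp at hq
      exact ⟨q.2, by simpa [← hq.2] using hq.1, by simp [← hq.2]⟩
  -- main counting bound
  have key : (((Finset.univ : Finset (V × V × V)).filter
      (fun t => (t.1, t.2.1) ∈ R ∧ (t.2.1, t.2.2) ∈ S ∧ (t.1, t.2.2) ∈ T)).card : ℝ)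
      ≤ ∑ a : V, (dR a : ℝ) * (dT a : ℝ) := by
    have hcard : ((Finset.univ : Finset (V × V × V)).filter
        (fun t => (t.1, t.2.1) ∈ R ∧ (t.2.1, t.2.2) ∈ S ∧ (t.1, t.2.2) ∈ T)).card
        = ∑ a : V, ((Finset.univ : Finset (V × V)).filter
            (fun p => (a, p.1) ∈ R ∧ (p.1, p.2) ∈ S ∧ (a, p.2) ∈ T)).card := by
      rw [Finset.card_filter, Fintype.sum_prod_type]
      simp only [Finset.card_filter]
    have hle : ∀ a : V, ((Finset.univ : Finset (V × V)).filter
        (fun p => (a, p.1) ∈ R ∧ (p.1, p.2) ∈ S ∧ (a, p.2) ∈ T)).card ≤ dR a * dT a := by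
      intro a
      have h1 : ((Finset.univ : Finset (V × V)).filter
          (fun p => (a, p.1) ∈ R ∧ (p.1, p.2) ∈ S ∧ (a, p.2) ∈ T)) ⊆
          ((Finset.univ : Finset V).filter (fun b => (a, b) ∈ R)) ×ˢ
          ((Finset.univ : Finset V).filter (fun c => (a, c) ∈ T)) := by
        intro p hp
        simp at hp ⊢
        exact ⟨hp.1, hp.2.2⟩
      calc _ ≤ _ := Finset.card_le_card h1
        _ = dR a * dT a := by
            rw [Finset.card_product, deg_eq R a, deg_eq T a]
    rw [hcard]
    push_cast
    exact Finset.sum_le_sum (fun a _ => by exact_mod_cast hle a)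
  have cs : ∑ a : V, (dR a : ℝ) * (dT a : ℝ) ≤
      Real.sqrt (∑ a : V, ((dR a : ℝ)) ^ 2) * Real.sqrt (∑ a : V, ((dT a : ℝ)) ^ 2) := by
    have h := Finset.sum_mul_sq_le_sq_mul_sq univ (fun a => (dR a : ℝ)) (fun a => (dT a : ℝ))
    have hnn : (0:ℝ) ≤ ∑ a : V, (dR a : ℝ) * (dT a : ℝ) :=
      Finset.sum_nonneg fun a _ => by positivity
    calc ∑ a : V, (dR a : ℝ) * (dT a : ℝ)
        = Real.sqrt ((∑ a : V, (dR a : ℝ) * (dT a : ℝ)) ^ 2) := by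
          rw [Real.sqrt_sq hnn]
      _ ≤ Real.sqrt ((∑ a : V, ((dR a : ℝ)) ^ 2) * ∑ a : V, ((dT a : ℝ)) ^ 2) :=
          Real.sqrt_le_sqrt h
      _ = _ := Real.sqrt_mul (Finset.sum_nonneg fun a _ => by positivity) _
  have main := key.trans cs
  refine ⟨main, fun hR hT => ?_⟩
  calc (((Finset.univ : Finset (V × V × V)).filter
        (fun t => (t.1, t.2.1) ∈ R ∧ (t.2.1, t.2.2) ∈ S ∧ (t.1, t.2.2) ∈ T)).card : ℝ)
      ≤ _ := main
    _ ≤ Real.sqrt (L ^ 2) * Real.sqrt (L ^ 2) :=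
        mul_le_mul (Real.sqrt_le_sqrt hR) (Real.sqrt_le_sqrt hT) (Real.sqrt_nonneg _)
          (Real.sqrt_nonneg _)
    _ = L ^ 2 := Real.mul_self_sqrt (sq_nonneg L)
end

section
/- Let L >= 1 be a real number and m = floor(L^{2/3}). Consider R = S = T = [m] × [m]. Then each of R, S, T has ℓ2-norm of its out-degree sequence at most L, while the number of triples (a,b,c) with (a,b) in R, (b,c) in S, (c,a) in T is m^3 >= L^2 / 8. -/
open Finset

/-- Tight lower-bound instance for the cyclic triangle under ℓ2-norm bounds: with
`m = ⌊L^{2/3}⌋` and `R = S = T = [m] × [m]`, each relation has ℓ2-norm of its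
out-degree sequence at most `L`, while the triangle count is `m³ ≥ L²/8`. -/
theorem triangle_l2_lower_bound_instance (L : ℝ) (hL : 1 ≤ L)
    (m : ℕ) (hm : m = ⌊L ^ ((2 : ℝ) / 3)⌋₊)
    (R : Finset (ℕ × ℕ)) (hR : R = Finset.Icc 1 m ×ˢ Finset.Icc 1 m) :
    Real.sqrt (∑ a ∈ Finset.Icc 1 m, (((R.filter (fun q => q.1 = a)).card : ℝ)) ^ 2) ≤ L ∧
    ((Finset.Icc 1 m ×ˢ Finset.Icc 1 m ×ˢ Finset.Icc 1 m).filter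
      (fun t : ℕ × ℕ × ℕ => (t.1, t.2.1) ∈ R ∧ (t.2.1, t.2.2) ∈ R ∧ (t.2.2, t.1) ∈ R)).card
      = m ^ 3 ∧
    L ^ 2 / 8 ≤ (m : ℝ) ^ 3 := by
  have hL0 : (0:ℝ) < L := lt_of_lt_of_le one_pos hL
  set x : ℝ := L ^ ((2:ℝ)/3) with hx
  have hx1 : (1:ℝ) ≤ x := Real.one_le_rpow hL (by norm_num)
  have hmx : (m:ℝ) ≤ x := by
    rw [hm]; exact Nat.floor_le (by linarith)
  have hxm : x / 2 ≤ m := by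
    rcases le_or_gt 2 x with h | h
    · have : x - 1 < (⌊x⌋₊ : ℝ) := Nat.sub_one_lt_floor x
      rw [hm]; linarith
    · have : (1:ℕ) ≤ m := by
        rw [hm]; exact Nat.one_le_floor_iff x |>.mpr hx1
      have : (1:ℝ) ≤ (m:ℝ) := by exact_mod_cast this
      linarith
  have hx3 : x ^ 3 = L ^ 2 := by
    rw [hx, ← Real.rpow_natCast (L ^ ((2:ℝ)/3)) 3, ← Real.rpow_mul hL0.le]
    norm_num
  have hcard : ∀ a ∈ Finset.Icc 1 m, (R.filter (fun q => q.1 = a)).card = m := by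
    intro a ha
    have : R.filter (fun q => q.1 = a) = {a} ×ˢ Finset.Icc 1 m := by
      ext ⟨p, q⟩
      simp only [hR, mem_filter, mem_product, mem_singleton]
      constructor
      · rintro ⟨⟨h1, h2⟩, h3⟩; exact ⟨h3, h2⟩
      · rintro ⟨h1, h2⟩; subst h1; exact ⟨⟨by simpa using ha, h2⟩, rfl⟩
    rw [this]; simp
  refine ⟨?_, ?_, ?_⟩
  · have hsum : ∑ a ∈ Finset.Icc 1 m, (((R.filter (fun q => q.1 = a)).card : ℝ)) ^ 2
        = (m:ℝ) ^ 3 := by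
      rw [Finset.sum_congr rfl (fun a ha => by rw [hcard a ha])]
      simp [Nat.Icc_eq_range', mul_comm]; ring
    rw [hsum]
    rw [show L = Real.sqrt (L ^ 2) by rw [Real.sqrt_sq hL0.le]]
    apply Real.sqrt_le_sqrt
    rw [← hx3]
    exact pow_le_pow_left₀ (by positivity) hmx 3
  · rw [Finset.filter_true_of_mem, Finset.card_product, Finset.card_product]
    · simp [Nat.card_Icc]; ring
    · rintro ⟨a, b, c⟩ ht
      simp only [mem_product] at ht
      simp only [hR, mem_product]
      exact ⟨⟨ht.1, ht.2.1⟩, ⟨ht.2.1, ht.2.2⟩, ht.2.2, ht.1⟩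
  · have : (x/2) ^ 3 ≤ (m:ℝ) ^ 3 := pow_le_pow_left₀ (by positivity) hxm 3
    calc L ^ 2 / 8 = (x/2)^3 := by rw [div_pow, hx3]; norm_num
    _ ≤ (m:ℝ)^3 := this
end

section
/- Let L be a positive integer and set R = S = T = {(i,i) : i in [L^3]} (the diagonal relation on [L^3]). Then each of R, S, T has ℓ3-norm of its out-degree sequence exactly L, and the number of triples (a,b,c) with (a,b) in R, (b,c) in S, (c,a) in T is exactly L^3. In particular, for L > 1 the triangle count L^3 strictly exceeds L^{9/4}. -/
open Finset

/-- Diagonal instance for the cyclic triangle under ℓ3-norm bounds: with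
`R = S = T = {(i,i) : i ∈ [L³]}`, the ℓ3-norm of the out-degree sequence is exactly
`L`, the triangle count is exactly `L³`, and for `L > 1` this exceeds `L^{9/4}`. -/
theorem triangle_l3_diagonal_instance (L : ℕ) (hL : 0 < L)
    (R : Finset (ℕ × ℕ)) (hR : R = (Finset.Icc 1 (L ^ 3)).image (fun i => (i, i))) :
    (∑ a ∈ Finset.Icc 1 (L ^ 3), (((R.filter (fun q => q.1 = a)).card : ℝ)) ^ (3 : ℝ))
        ^ ((1 : ℝ) / 3) = (L : ℝ) ∧
    ((Finset.Icc 1 (L ^ 3) ×ˢ Finset.Icc 1 (L ^ 3) ×ˢ Finset.Icc 1 (L ^ 3)).filter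
      (fun t : ℕ × ℕ × ℕ => (t.1, t.2.1) ∈ R ∧ (t.2.1, t.2.2) ∈ R ∧ (t.2.2, t.1) ∈ R)).card
      = L ^ 3 ∧
    (1 < L → (L : ℝ) ^ ((9 : ℝ) / 4) < ((L : ℝ)) ^ (3 : ℕ)) := by
  have hmem : ∀ x y : ℕ, (x, y) ∈ R ↔ x ∈ Finset.Icc 1 (L ^ 3) ∧ y = x := by
    intro x y
    subst hR
    rw [Finset.mem_image]
    constructor
    · rintro ⟨i, hi, h⟩
      rw [Prod.mk.injEq] at h
      obtain ⟨rfl, h2⟩ := h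
      exact ⟨hi, h2.symm⟩
    · rintro ⟨hx, rfl⟩
      exact ⟨_, hx, rfl⟩
  refine ⟨?_, ?_, ?_⟩
  · have hfil : ∀ a ∈ Finset.Icc 1 (L ^ 3),
        R.filter (fun q => q.1 = a) = {(a, a)} := by
      intro a ha
      ext ⟨x, y⟩
      simp only [Finset.mem_filter, Finset.mem_singleton, Prod.ext_iff]
      constructor
      · rintro ⟨hxy, rfl⟩
        exact ⟨rfl, ((hmem _ _).1 hxy).2⟩
      · rintro ⟨rfl, rfl⟩
        exact ⟨(hmem _ _).2 ⟨ha, rfl⟩, rfl⟩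
    have hsum : (∑ a ∈ Finset.Icc 1 (L ^ 3),
        (((R.filter (fun q => q.1 = a)).card : ℝ)) ^ (3 : ℝ)) = (L : ℝ) ^ (3 : ℕ) := by
      rw [Finset.sum_congr rfl (fun a ha => by rw [hfil a ha])]
      simp [Nat.card_Icc]
    rw [hsum, ← Real.rpow_natCast (L : ℝ) 3, ← Real.rpow_mul (by positivity)]
    norm_num
  · have : ((Finset.Icc 1 (L ^ 3) ×ˢ Finset.Icc 1 (L ^ 3) ×ˢ Finset.Icc 1 (L ^ 3)).filter
      (fun t : ℕ × ℕ × ℕ => (t.1, t.2.1) ∈ R ∧ (t.2.1, t.2.2) ∈ R ∧ (t.2.2, t.1) ∈ R))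
      = (Finset.Icc 1 (L ^ 3)).image (fun i => (i, i, i)) := by
      ext ⟨a, b, c⟩
      simp only [Finset.mem_filter, Finset.mem_product, Finset.mem_image, Prod.ext_iff]
      constructor
      · rintro ⟨⟨ha, hb, hc⟩, h1, h2, h3⟩
        have e1 := ((hmem _ _).1 h1).2
        have e2 := ((hmem _ _).1 h2).2
        subst e1; subst e2
        exact ⟨_, ha, rfl, rfl, rfl⟩
      · rintro ⟨i, hi, rfl, rfl, rfl⟩
        exact ⟨⟨hi, hi, hi⟩, (hmem _ _).2 ⟨hi, rfl⟩, (hmem _ _).2 ⟨hi, rfl⟩,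
          (hmem _ _).2 ⟨hi, rfl⟩⟩
    rw [this, Finset.card_image_of_injective _ (fun x y h => by
      simpa [Prod.ext_iff] using h)]
    simp [Nat.card_Icc]
  · intro hL1
    have h1 : (1 : ℝ) < (L : ℝ) := by exact_mod_cast hL1
    rw [← Real.rpow_natCast (L : ℝ) 3]
    exact Real.rpow_lt_rpow_of_exponent_lt h1 (by norm_num)
end

section
/- Let L be a positive integer that is a perfect square, and set R = [L^2] × {1} and S = {1} × [sqrt(L)]. Then the ℓ2-norms of the out-degree sequences of R and S are each at most L, while the join {(a,b,c) : (a,b) in R, (b,c) in S} has exactly L^{5/2} elements. -/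
open Finset

/-- Acyclic-subquery counterexample under ℓ2-norm bounds: for a perfect square `L`,
with `R = [L²] × {1}` and `S = {1} × [√L]`, the ℓ2-norms of the out-degree sequences
of `R` and `S` are at most `L`, while the two-edge path join has exactly
`L^{5/2} = L² · √L` elements. -/
theorem path_join_l2_counterexample (L s : ℕ) (hL : 0 < L) (hs : L = s ^ 2)
    (R S : Finset (ℕ × ℕ))
    (hR : R = Finset.Icc 1 (L ^ 2) ×ˢ {1})
    (hS : S = {1} ×ˢ Finset.Icc 1 s) :
    Real.sqrt (∑ a ∈ Finset.Icc 1 (L ^ 2), (((R.filter (fun q => q.1 = a)).card : ℝ)) ^ 2)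
      ≤ L ∧
    Real.sqrt (∑ a ∈ ({1} : Finset ℕ), (((S.filter (fun q => q.1 = a)).card : ℝ)) ^ 2)
      ≤ L ∧
    ((Finset.Icc 1 (L ^ 2) ×ˢ ({1} : Finset ℕ) ×ˢ Finset.Icc 1 s).filter
      (fun t : ℕ × ℕ × ℕ => (t.1, t.2.1) ∈ R ∧ (t.2.1, t.2.2) ∈ S)).card = L ^ 2 * s ∧
    ((L ^ 2 * s : ℕ) : ℝ) = (L : ℝ) ^ ((5 : ℝ) / 2) := by
  have hs1 : 1 ≤ s := by nlinarith
  refine ⟨?_, ?_, ?_, ?_⟩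
  · have h1 : ∀ a ∈ Finset.Icc 1 (L ^ 2),
        (R.filter (fun q => q.1 = a)) = {(a, 1)} := by
      intro a ha
      subst hR
      ext q
      simp only [mem_filter, mem_product, mem_Icc, mem_singleton, Prod.ext_iff] at *
      omega
    have : (∑ a ∈ Finset.Icc 1 (L ^ 2),
        (((R.filter (fun q => q.1 = a)).card : ℝ)) ^ 2) = (L : ℝ) ^ 2 := by
      rw [Finset.sum_congr rfl (fun a ha => by rw [h1 a ha])]
      simp [Nat.card_Icc, mul_comm]
    rw [this, Real.sqrt_sq (by positivity)]
  · have h1 : (S.filter (fun q => q.1 = 1)) = S := by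
      subst hS
      apply Finset.filter_true_of_mem
      intro q hq
      simp only [mem_product, mem_singleton] at hq
      exact hq.1
    have hcard : S.card = s := by subst hS; simp
    simp only [Finset.sum_singleton, h1, hcard]
    rw [Real.sqrt_sq (by positivity)]
    exact_mod_cast by nlinarith
  · rw [Finset.filter_true_of_mem]
    · simp [mul_comm]
    · rintro ⟨a, b, c⟩ ht
      simp only [mem_product, mem_singleton, mem_Icc] at ht
      subst hR hS
      simp only [mem_product, mem_singleton, mem_Icc]
      exact ⟨⟨ht.1, ht.2.1⟩, ht.2.1, ht.2.2⟩
  · subst hs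
    push_cast
    have h2 : ((s:ℝ)^2)^((5:ℝ)/2) = (s:ℝ)^(5:ℕ) := by
      rw [← Real.rpow_natCast (s:ℝ) 2, ← Real.rpow_mul (by positivity),
        ← Real.rpow_natCast (s:ℝ) 5]
      norm_num
    rw [h2]
    ring
end

section
/- Let n >= 3 be an integer and let L, d be powers of two with d^2 dividing L. Define the block relation B = union over j in [L/d^2] of the set [(j-1)d + 1, j*d] × [(j-1)d + 1, j*d] (a disjoint union of L/d^2 complete blocks of size d × d). Consider the directed n-cycle query in which every one of the n relations equals B. Then |B| = L, the maximum out-degree of B is d, and the number of n-tuples (a_1, ..., a_n) with (a_i, a_{i+1 mod n}) in B for all i is exactly (L / d^2) * d^n = L * d^{n-2}. -/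
/-!
Every pair of the block relation lies inside one block `((k-1)d, kd]²`, whose index
`k = (x-1)/d + 1` is determined by either coordinate. Along a closed walk `t₀ → t₁ → ⋯ → t₀`
this index is therefore constant, so a tuple of the cycle join is exactly a tuple with all
coordinates in one common block: `L/d²` blocks, `dⁿ` tuples each. The out-degree of `a` is the
size of its block, `d`, and `|B| = (L/d²)·d² = L`.
-/

open Finset

def block (d k : ℕ) : Finset ℕ := Icc ((k - 1) * d + 1) (k * d)

def blockIndex (d x : ℕ) : ℕ := (x - 1) / d + 1

def blockRel (d m : ℕ) : Finset (ℕ × ℕ) := (Icc 1 m).biUnion fun k => block d k ×ˢ block d k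

def cycleJoin {α : Type*} [DecidableEq α] (R : Finset (α × α)) (S : Finset α) (n : ℕ) [NeZero n] :
    Finset (Fin n → α) :=
  (Fintype.piFinset fun _ => S).filter fun t => ∀ i, (t i, t (i + 1)) ∈ R

open Fin.NatCast in
theorem Fin.apply_eq_of_forall_apply_add_one_eq {α : Type*} {n : ℕ} [NeZero n] {g : Fin n → α}
    (h : ∀ i, g (i + 1) = g i) (i j : Fin n) : g i = g j := by
  have key : ∀ r : ℕ, g (r : Fin n) = g 0 := fun r => by
    induction r with
    | zero => rfl
    | succ r ih => rw [Nat.cast_succ, h, ih]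
  rw [← Fin.cast_val_eq_self i, ← Fin.cast_val_eq_self j, key, key]

section Block

variable {d k m x y : ℕ}

theorem eq_blockIndex_of_mem_block (h : x ∈ block d k) : k = blockIndex d x := by
  obtain ⟨h1, h2⟩ := mem_Icc.1 h
  obtain _ | k := k
  · rw [zero_mul] at h2
    lia
  rw [Nat.add_sub_cancel] at h1
  have hd : d ≠ 0 := by
    rintro rfl
    rw [mul_zero] at h2
    lia
  rw [blockIndex, Nat.div_eq_of_lt_le (k := k) (by lia) (by lia)]

open Function in
theorem pairwise_disjoint_block (d : ℕ) : Pairwise (Disjoint on (block d)) := fun _ _ hne =>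
  disjoint_left.2 fun _ h h' =>
    hne ((eq_blockIndex_of_mem_block h).trans (eq_blockIndex_of_mem_block h').symm)

theorem card_block (hk : 1 ≤ k) : #(block d k) = d := by
  obtain ⟨k, rfl⟩ := Nat.exists_eq_add_of_le' hk
  rw [block, Nat.card_Icc, Nat.add_sub_cancel, add_mul, one_mul]
  lia

theorem block_subset_Icc (hk : k ≤ m) : block d k ⊆ Icc 1 (m * d) := fun _ hx => by
  rw [block, mem_Icc] at hx
  have := Nat.mul_le_mul_right d hk
  exact mem_Icc.2 ⟨by lia, by lia⟩

theorem mem_blockRel : (x, y) ∈ blockRel d m ↔ ∃ k ∈ Icc 1 m, x ∈ block d k ∧ y ∈ block d k := by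
  simp [blockRel]

theorem blockIndex_eq_of_mem_blockRel (h : (x, y) ∈ blockRel d m) :
    blockIndex d x = blockIndex d y := by
  obtain ⟨k, -, hx, hy⟩ := mem_blockRel.1 h
  rw [← eq_blockIndex_of_mem_block hx, ← eq_blockIndex_of_mem_block hy]

theorem card_blockRel : #(blockRel d m) = m * d ^ 2 := by
  rw [blockRel, card_biUnion fun _ _ _ _ hne =>
    disjoint_product.2 (Or.inl (pairwise_disjoint_block d hne))]
  rw [sum_congr rfl fun k hk => by rw [card_product, card_block (mem_Icc.1 hk).1, ← sq],
    sum_const, Nat.card_Icc, Nat.add_sub_cancel, smul_eq_mul]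

theorem card_filter_fst_blockRel_le (a : ℕ) : #((blockRel d m).filter (·.1 = a)) ≤ d := by
  calc #((blockRel d m).filter (·.1 = a))
      ≤ #({a} ×ˢ block d (blockIndex d a)) := by
        refine card_le_card fun ⟨x, y⟩ h => ?_
        obtain ⟨hxy, rfl⟩ := mem_filter.1 h
        obtain ⟨k, -, hx, hy⟩ := mem_blockRel.1 hxy
        rw [← eq_blockIndex_of_mem_block hx]
        exact mem_product.2 ⟨mem_singleton_self x, hy⟩
    _ = d := by
        rw [card_product, card_singleton, one_mul, card_block (k := blockIndex d a) le_add_self]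

theorem card_filter_fst_blockRel (hk : k ∈ Icc 1 m) {a : ℕ} (ha : a ∈ block d k) :
    #((blockRel d m).filter (·.1 = a)) = d := by
  refine (card_filter_fst_blockRel_le a).antisymm ?_
  calc d = #({a} ×ˢ block d k) := by
        rw [card_product, card_singleton, one_mul, card_block (mem_Icc.1 hk).1]
    _ ≤ _ := card_le_card fun ⟨x, y⟩ h => by
        rw [mem_product, mem_singleton] at h
        obtain ⟨rfl, hy⟩ := h
        exact mem_filter.2 ⟨mem_blockRel.2 ⟨k, hk, ha, hy⟩, rfl⟩

variable {n L : ℕ} [NeZero n]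

theorem cycleJoin_blockRel (hL : m * d ≤ L) : cycleJoin (blockRel d m) (Icc 1 L) n =
    (Icc 1 m).biUnion fun k => Fintype.piFinset fun _ => block d k := by
  ext t
  simp only [cycleJoin, mem_filter, Fintype.mem_piFinset, mem_biUnion]
  constructor
  · rintro ⟨-, ht⟩
    obtain ⟨k, hk, ht0, -⟩ := mem_blockRel.1 (ht 0)
    refine ⟨k, hk, fun i => ?_⟩
    obtain ⟨k', -, hti, -⟩ := mem_blockRel.1 (ht i)
    have hidx := Fin.apply_eq_of_forall_apply_add_one_eq (g := fun i => blockIndex d (t i))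
      (fun i => (blockIndex_eq_of_mem_blockRel (ht i)).symm) i 0
    have hk' : k' = k := by
      rw [eq_blockIndex_of_mem_block hti, hidx, ← eq_blockIndex_of_mem_block ht0]
    exact hk' ▸ hti
  · rintro ⟨k, hk, ht⟩
    exact ⟨fun i => Icc_subset_Icc_right hL (block_subset_Icc (mem_Icc.1 hk).2 (ht i)),
      fun i => mem_blockRel.2 ⟨k, hk, ht i, ht (i + 1)⟩⟩

theorem card_cycleJoin_blockRel (hL : m * d ≤ L) :
    #(cycleJoin (blockRel d m) (Icc 1 L) n) = m * d ^ n := by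
  rw [cycleJoin_blockRel hL, card_biUnion fun _ _ _ _ hne =>
    Fintype.piFinset_disjoint_of_disjoint _ _ (a := (0 : Fin n)) (pairwise_disjoint_block d hne)]
  rw [sum_congr rfl fun k hk => by
      rw [Fintype.card_piFinset, prod_const, card_univ, Fintype.card_fin,
        card_block (mem_Icc.1 hk).1],
    sum_const, Nat.card_Icc, Nat.add_sub_cancel, smul_eq_mul]

end Block

theorem cycle_block_instance_general (n : ℕ) [NeZero n] (hn : 3 ≤ n)
    (L d i : ℕ) (hL : L = 2 ^ i) (hdvd : d ^ 2 ∣ L)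
    (B : Finset (ℕ × ℕ))
    (hB : B = (Finset.Icc 1 (L / d ^ 2)).biUnion
      (fun k => Finset.Icc ((k - 1) * d + 1) (k * d) ×ˢ Finset.Icc ((k - 1) * d + 1) (k * d))) :
    B.card = L ∧
    (∀ a : ℕ, (B.filter (fun q => q.1 = a)).card ≤ d) ∧
    (∃ a : ℕ, (B.filter (fun q => q.1 = a)).card = d) ∧
    ((Fintype.piFinset (fun _ : Fin n => Finset.Icc 1 L)).filter
        (fun t : Fin n → ℕ => ∀ i : Fin n, (t i, t (i + 1)) ∈ B)).card
      = (L / d ^ 2) * d ^ n ∧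
    (L / d ^ 2) * d ^ n = L * d ^ (n - 2) := by
  subst hB
  obtain ⟨m, rfl⟩ := hdvd
  have hL0 : d ^ 2 * m ≠ 0 := hL ▸ pow_ne_zero i two_ne_zero
  have hd : d ≠ 0 := by rintro rfl; simp at hL0
  have hm : 1 ≤ m := Nat.one_le_iff_ne_zero.2 (right_ne_zero_of_mul hL0)
  have hmd : m * d ≤ d ^ 2 * m := by
    rw [mul_comm, sq]
    exact Nat.mul_le_mul_right m (Nat.le_mul_self d)
  rw [Nat.mul_div_cancel_left m (by positivity)]
  refine ⟨card_blockRel.trans (mul_comm _ _), card_filter_fst_blockRel_le, ⟨1, ?_⟩,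
    card_cycleJoin_blockRel hmd, ?_⟩
  · exact card_filter_fst_blockRel (mem_Icc.2 ⟨le_rfl, hm⟩)
      (by simpa [block] using Nat.one_le_iff_ne_zero.2 hd)
  · rw [mul_comm (d ^ 2), mul_assoc, ← pow_add, Nat.add_sub_cancel' (by lia)]

/-- Block-based hard instance for the directed `n`-cycle: for powers of two `L, d`
with `d² ∣ L`, the block relation `B = ⋃_{j∈[L/d²]} ((j-1)d, jd] × ((j-1)d, jd]`
has `|B| = L`, maximum out-degree `d`, and the `n`-cycle join over `n` copies of `B`
has exactly `(L/d²) · dⁿ = L · d^{n-2}` tuples. -/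
theorem cycle_block_instance (n : ℕ) [NeZero n] (hn : 3 ≤ n)
    (L d i j : ℕ) (hL : L = 2 ^ i) (hd : d = 2 ^ j) (hdvd : d ^ 2 ∣ L)
    (B : Finset (ℕ × ℕ))
    (hB : B = (Finset.Icc 1 (L / d ^ 2)).biUnion
      (fun k => Finset.Icc ((k - 1) * d + 1) (k * d) ×ˢ Finset.Icc ((k - 1) * d + 1) (k * d))) :
    B.card = L ∧
    (∀ a : ℕ, (B.filter (fun q => q.1 = a)).card ≤ d) ∧
    (∃ a : ℕ, (B.filter (fun q => q.1 = a)).card = d) ∧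
    ((Fintype.piFinset (fun _ : Fin n => Finset.Icc 1 L)).filter
        (fun t : Fin n → ℕ => ∀ i : Fin n, (t i, t (i + 1)) ∈ B)).card
      = (L / d ^ 2) * d ^ n ∧
    (L / d ^ 2) * d ^ n = L * d ^ (n - 2) :=
  cycle_block_instance_general n hn L d i hL hdvd B hB
end
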